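/- For any smooth immersed hypersurface Σ ⊂ ℝ^{n+1} with Gauss map u : Σ → S^n (sending a point to its outer unit normal), the tension field of u satisfies τ(u) = ∇H, where H is the mean curvature and ∇H is its gradient, identified with a section of u^{-1}TS^n via the Weingarten map. -/

import Mathlib

open scoped BigOperators RealInnerProductSpace
open Real

noncomputable section

/-- Partial derivative (in the `i`-th chart direction) of a vector-valued map on ℝⁿ. -/
def pdv {n m : ℕ} (i : Fin n) (f : (Fin n → ℝ) → EuclideanSpace ℝ (Fin m))
    (x : Fin n → ℝ) : EuclideanSpace ℝ (Fin m) :=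
  fderiv ℝ f x (Pi.single i 1)

/-- Partial derivative of a scalar function on ℝⁿ. -/
def pdr {n : ℕ} (i : Fin n) (f : (Fin n → ℝ) → ℝ) (x : Fin n → ℝ) : ℝ :=
  fderiv ℝ f x (Pi.single i 1)

/-- Induced metric g_{ij} = ⟪∂_i F, ∂_j F⟫ of an immersion F. -/
def gmet {n : ℕ} (F : (Fin n → ℝ) → EuclideanSpace ℝ (Fin (n + 1)))
    (x : Fin n → ℝ) : Matrix (Fin n) (Fin n) ℝ :=
  Matrix.of fun i j => ⟪pdv i F x, pdv j F x⟫

/-- Second fundamental form h_{ij} w.r.t. the outer unit normal ν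
(convention: positive for convex hypersurfaces with outer normal). -/
def sff {n : ℕ} (F : (Fin n → ℝ) → EuclideanSpace ℝ (Fin (n + 1)))
    (ν : (Fin n → ℝ) → EuclideanSpace ℝ (Fin (n + 1)))
    (x : Fin n → ℝ) (i j : Fin n) : ℝ :=
  -⟪pdv i (fun y => pdv j F y) x, ν x⟫

/-- Mean curvature H = g^{ij} h_{ij}. -/
def meanCurv {n : ℕ} (F ν : (Fin n → ℝ) → EuclideanSpace ℝ (Fin (n + 1)))
    (x : Fin n → ℝ) : ℝ :=
  ∑ i, ∑ j, (gmet F x)⁻¹ i j * sff F ν x i j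

/-- Christoffel symbols Γ^k_{ij} of the induced metric. -/
def chr {n : ℕ} (F : (Fin n → ℝ) → EuclideanSpace ℝ (Fin (n + 1)))
    (x : Fin n → ℝ) (k i j : Fin n) : ℝ :=
  ∑ l, (gmet F x)⁻¹ k l * ⟪pdv i (fun y => pdv j F y) x, pdv l F x⟫

/-- Scalar Laplace–Beltrami operator of the induced metric. -/
def lapS {n : ℕ} (F : (Fin n → ℝ) → EuclideanSpace ℝ (Fin (n + 1)))
    (f : (Fin n → ℝ) → ℝ) (x : Fin n → ℝ) : ℝ :=
  ∑ i, ∑ j, (gmet F x)⁻¹ i j *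
    (pdr i (fun y => pdr j f y) x - ∑ k, chr F x k i j * pdr k f x)

/-- Componentwise Laplace–Beltrami operator on ℝ^{n+1}-valued maps. -/
def lapV {n : ℕ} (F : (Fin n → ℝ) → EuclideanSpace ℝ (Fin (n + 1)))
    (f : (Fin n → ℝ) → EuclideanSpace ℝ (Fin (n + 1)))
    (x : Fin n → ℝ) : EuclideanSpace ℝ (Fin (n + 1)) :=
  ∑ i, ∑ j, (gmet F x)⁻¹ i j •
    (pdv i (fun y => pdv j f y) x - ∑ k, chr F x k i j • pdv k f x)

/-- Energy density |∇u|² = g^{ij}⟪∂_i u, ∂_j u⟫ of the Gauss map u = ν. -/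
def eDen {n : ℕ} (F ν : (Fin n → ℝ) → EuclideanSpace ℝ (Fin (n + 1)))
    (x : Fin n → ℝ) : ℝ :=
  ∑ i, ∑ j, (gmet F x)⁻¹ i j * ⟪pdv i ν x, pdv j ν x⟫

section Aux

variable {n m : ℕ}

lemma contDiff_pdv (i : Fin n) {f : (Fin n → ℝ) → EuclideanSpace ℝ (Fin m)}
    (hf : ContDiff ℝ (⊤ : ℕ∞) f) : ContDiff ℝ (⊤ : ℕ∞) (pdv i f) :=
  (hf.fderiv_right (le_refl _)).clm_apply contDiff_const

lemma pdv_comm {f : (Fin n → ℝ) → EuclideanSpace ℝ (Fin m)} (hf : ContDiff ℝ (⊤ : ℕ∞) f)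
    (i j : Fin n) (x : Fin n → ℝ) :
    pdv i (fun y => pdv j f y) x = pdv j (fun y => pdv i f y) x := by
  have hsym : IsSymmSndFDerivAt ℝ f x := by
    apply ContDiffAt.isSymmSndFDerivAt hf.contDiffAt
    rw [minSmoothness_of_isRCLikeNormedField]
    exact WithTop.coe_le_coe.mpr le_top
  have hd : DifferentiableAt ℝ (fderiv ℝ f) x :=
    ((hf.fderiv_right (m := (⊤ : ℕ∞)) (le_refl _)).differentiable (by simp)).differentiableAt
  have key : ∀ a b : Fin n,
      pdv a (fun y => pdv b f y) x = fderiv ℝ (fderiv ℝ f) x (Pi.single a 1) (Pi.single b 1) := by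
    intro a b
    unfold pdv
    rw [fderiv_clm_apply hd (differentiableAt_const _)]
    simp
  rw [key i j, key j i, hsym.eq]

lemma pdr_inner (i : Fin n) {f g : (Fin n → ℝ) → EuclideanSpace ℝ (Fin m)} {x : Fin n → ℝ}
    (hf : DifferentiableAt ℝ f x) (hg : DifferentiableAt ℝ g x) :
    pdr i (fun y => ⟪f y, g y⟫) x = ⟪pdv i f x, g x⟫ + ⟪f x, pdv i g x⟫ := by
  unfold pdr pdv
  rw [fderiv_inner_apply ℝ hf hg]
  ring

lemma pdr_mul (i : Fin n) {f g : (Fin n → ℝ) → ℝ} {x : Fin n → ℝ}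
    (hf : DifferentiableAt ℝ f x) (hg : DifferentiableAt ℝ g x) :
    pdr i (fun y => f y * g y) x = pdr i f x * g x + f x * pdr i g x := by
  unfold pdr
  rw [fderiv_fun_mul hf hg]
  simp only [ContinuousLinearMap.add_apply, ContinuousLinearMap.smul_apply, smul_eq_mul]
  ring

lemma pdr_const (i : Fin n) (c : ℝ) (x : Fin n → ℝ) : pdr i (fun _ => c) x = 0 := by
  unfold pdr; simp

lemma pdr_congr (i : Fin n) {f g : (Fin n → ℝ) → ℝ} (h : ∀ y, f y = g y) (x : Fin n → ℝ) :
    pdr i f x = pdr i g x := by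
  unfold pdr; rw [funext h]

lemma pdr_neg (i : Fin n) (f : (Fin n → ℝ) → ℝ) (x : Fin n → ℝ) :
    pdr i (fun y => -f y) x = -pdr i f x := by
  unfold pdr
  rw [fderiv_fun_neg]
  simp

lemma pdr_sum (i : Fin n) {ι : Type*} (s : Finset ι) {f : ι → (Fin n → ℝ) → ℝ} {x : Fin n → ℝ}
    (hf : ∀ k ∈ s, DifferentiableAt ℝ (f k) x) :
    pdr i (fun y => ∑ k ∈ s, f k y) x = ∑ k ∈ s, pdr i (f k) x := by
  unfold pdr
  rw [fderiv_fun_sum hf]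
  simp

lemma contDiff_det {k : ℕ} (M : (Fin n → ℝ) → Matrix (Fin k) (Fin k) ℝ)
    (h : ∀ i j, ContDiff ℝ (⊤ : ℕ∞) fun y => M y i j) : ContDiff ℝ (⊤ : ℕ∞) fun y => (M y).det := by
  have e : (fun y => (M y).det)
      = fun y => ∑ σ : Equiv.Perm (Fin k), ((Equiv.Perm.sign σ : ℤ) : ℝ) * ∏ i, M y (σ i) i := by
    funext y; rw [Matrix.det_apply']
  rw [e]
  apply ContDiff.sum
  intro σ _
  exact contDiff_const.mul (contDiff_prod fun i _ => h (σ i) i)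

lemma contDiff_gmet (F : (Fin n → ℝ) → EuclideanSpace ℝ (Fin (n + 1)))
    (hF : ContDiff ℝ (⊤ : ℕ∞) F) (i j : Fin n) : ContDiff ℝ (⊤ : ℕ∞) fun y => gmet F y i j := by
  have : (fun y => gmet F y i j) = fun y => ⟪pdv i F y, pdv j F y⟫ := rfl
  rw [this]
  exact (contDiff_pdv i hF).inner ℝ (contDiff_pdv j hF)

lemma contDiff_adjugate (F : (Fin n → ℝ) → EuclideanSpace ℝ (Fin (n + 1)))
    (hF : ContDiff ℝ (⊤ : ℕ∞) F) (i j : Fin n) :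
    ContDiff ℝ (⊤ : ℕ∞) fun y => (gmet F y).adjugate i j := by
  have e : (fun y => (gmet F y).adjugate i j)
      = fun y => ((gmet F y).updateRow j (Pi.single i 1)).det := by
    funext y; rw [Matrix.adjugate_apply]
  rw [e]
  apply contDiff_det
  intro a b
  by_cases hab : a = j
  · subst hab
    simp only [Matrix.updateRow_self]
    exact contDiff_const
  · simp only [Matrix.updateRow_ne hab]
    exact contDiff_gmet F hF a b

lemma gmetInv_eq (F : (Fin n → ℝ) → EuclideanSpace ℝ (Fin (n + 1))) (y : Fin n → ℝ)
    (i j : Fin n) : (gmet F y)⁻¹ i j = ((gmet F y).det)⁻¹ * (gmet F y).adjugate i j := by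
  rw [Matrix.inv_def, Ring.inverse_eq_inv, Matrix.smul_apply, smul_eq_mul]

lemma diffAt_gmetInv (F : (Fin n → ℝ) → EuclideanSpace ℝ (Fin (n + 1)))
    (hF : ContDiff ℝ (⊤ : ℕ∞) F) (himm : ∀ x, (gmet F x).det ≠ 0) (i j : Fin n) (x : Fin n → ℝ) :
    DifferentiableAt ℝ (fun y => (gmet F y)⁻¹ i j) x := by
  have e : (fun y => (gmet F y)⁻¹ i j)
      = fun y => ((gmet F y).det)⁻¹ * (gmet F y).adjugate i j := by
    funext y; exact gmetInv_eq F y i j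
  rw [e]
  have hdet : DifferentiableAt ℝ (fun y => (gmet F y).det) x :=
    ((contDiff_det _ (contDiff_gmet F hF)).differentiable (by simp)).differentiableAt
  exact (hdet.inv (himm x)).mul
    (((contDiff_adjugate F hF i j).differentiable (by simp)).differentiableAt)

lemma gmet_symm (F : (Fin n → ℝ) → EuclideanSpace ℝ (Fin (n + 1))) (y : Fin n → ℝ)
    (i j : Fin n) : gmet F y i j = gmet F y j i := by
  simp only [gmet, Matrix.of_apply]
  exact real_inner_comm _ _

lemma gmetInv_symm (F : (Fin n → ℝ) → EuclideanSpace ℝ (Fin (n + 1))) (y : Fin n → ℝ)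
    (i j : Fin n) : (gmet F y)⁻¹ i j = (gmet F y)⁻¹ j i := by
  have ht : Matrix.transpose (gmet F y) = gmet F y := by
    ext i j; exact gmet_symm F y j i
  conv_lhs => rw [← ht, ← Matrix.transpose_nonsing_inv]
  rw [Matrix.transpose_apply]

lemma gmetInv_mul (F : (Fin n → ℝ) → EuclideanSpace ℝ (Fin (n + 1)))
    (himm : ∀ x, (gmet F x).det ≠ 0) (y : Fin n → ℝ) (i k : Fin n) :
    ∑ j, (gmet F y)⁻¹ i j * gmet F y j k = if i = k then 1 else 0 := by
  have h := Matrix.nonsing_inv_mul (gmet F y) (Ne.isUnit (himm y))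
  have := congrFun (congrFun h i) k
  rw [Matrix.mul_apply] at this
  rw [this, Matrix.one_apply]

lemma mul_gmetInv (F : (Fin n → ℝ) → EuclideanSpace ℝ (Fin (n + 1)))
    (himm : ∀ x, (gmet F x).det ≠ 0) (y : Fin n → ℝ) (i k : Fin n) :
    ∑ j, gmet F y i j * (gmet F y)⁻¹ j k = if i = k then 1 else 0 := by
  have h := Matrix.mul_nonsing_inv (gmet F y) (Ne.isUnit (himm y))
  have := congrFun (congrFun h i) k
  rw [Matrix.mul_apply] at this
  rw [this, Matrix.one_apply]

lemma eq_of_inner_basis (F ν : (Fin n → ℝ) → EuclideanSpace ℝ (Fin (n + 1)))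
    (x : Fin n → ℝ) (hunit : ‖ν x‖ = 1) (horth : ∀ i, ⟪ν x, pdv i F x⟫ = 0)
    (himm : ∀ z, (gmet F z).det ≠ 0) {u v : EuclideanSpace ℝ (Fin (n + 1))}
    (h0 : ⟪ν x, u⟫ = ⟪ν x, v⟫) (h1 : ∀ l, ⟪pdv l F x, u⟫ = ⟪pdv l F x, v⟫) : u = v := by
  have hνν : ⟪ν x, ν x⟫ = (1:ℝ) := by
    rw [real_inner_self_eq_norm_mul_norm, hunit]; norm_num
  set b : Fin (n + 1) → EuclideanSpace ℝ (Fin (n + 1)) :=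
    Fin.cons (ν x) (fun i => pdv i F x) with hb
  have hli : LinearIndependent ℝ b := by
    rw [Fintype.linearIndependent_iff]
    intro c hc
    have hν : ∀ w : EuclideanSpace ℝ (Fin (n + 1)), ⟪w, ∑ a, c a • b a⟫ = (0:ℝ) := by
      intro w; rw [hc]; simp
    have hinner : ∀ w : EuclideanSpace ℝ (Fin (n + 1)),
        (∑ a, c a * ⟪w, b a⟫) = (0:ℝ) := by
      intro w
      have := hν w
      rw [inner_sum] at this
      simp only [real_inner_smul_right] at this
      exact this
    have hc0 : c 0 = 0 := by
      have := hinner (ν x)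
      rw [Fin.sum_univ_succ] at this
      have h' : c 0 = 0 ∨ ν x = 0 := by simpa [hb, horth, hνν] using this
      exact h'.resolve_right (fun h => by simp [h] at hunit)
    have hcs : ∀ k, (∑ i : Fin n, c i.succ * gmet F x k i) = 0 := by
      intro k
      have := hinner (pdv k F x)
      rw [Fin.sum_univ_succ] at this
      have hsym : ⟪pdv k F x, ν x⟫ = (0:ℝ) := by rw [real_inner_comm]; exact horth k
      simpa [hb, hsym, hc0, gmet] using this
    have hzero : ∀ i : Fin n, c i.succ = 0 := by
      intro j
      have key : (∑ k, (∑ i : Fin n, c i.succ * gmet F x k i) * (gmet F x)⁻¹ k j) = c j.succ := by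
        have swap : (∑ k, (∑ i : Fin n, c i.succ * gmet F x k i) * (gmet F x)⁻¹ k j)
            = ∑ i : Fin n, c i.succ * (∑ k, gmet F x i k * (gmet F x)⁻¹ k j) := by
          simp only [Finset.sum_mul]
          rw [Finset.sum_comm]
          apply Finset.sum_congr rfl; intro i _
          rw [Finset.mul_sum]
          apply Finset.sum_congr rfl; intro k _
          rw [gmet_symm F x k i]; ring
        rw [swap]
        have : ∀ i : Fin n, c i.succ * (∑ k, gmet F x i k * (gmet F x)⁻¹ k j)
            = c i.succ * (if i = j then 1 else 0) := by
          intro i; rw [mul_gmetInv F himm x i j]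
        rw [Finset.sum_congr rfl fun i _ => this i]
        simp
      rw [← key]
      simp only [hcs, zero_mul, Finset.sum_const_zero]
    intro a
    refine Fin.cases hc0 hzero a
  have hcard : Fintype.card (Fin (n + 1)) = Module.finrank ℝ (EuclideanSpace ℝ (Fin (n + 1))) := by
    simp
  let B := basisOfLinearIndependentOfCardEqFinrank hli hcard
  have hB : ⇑B = b := coe_basisOfLinearIndependentOfCardEqFinrank hli hcard
  apply InnerProductSpace.ext_inner_left_basis (𝕜 := ℝ) B
  intro a
  rw [hB]
  refine Fin.cases ?_ ?_ a
  · simpa [hb] using h0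
  · intro i; simpa [hb] using h1 i

lemma sum4_reindex (f : Fin n → Fin n → Fin n → Fin n → ℝ)
    (σ : (Fin n × Fin n × Fin n × Fin n) ≃ (Fin n × Fin n × Fin n × Fin n)) :
    (∑ a, ∑ b, ∑ c, ∑ d, f a b c d)
      = ∑ a, ∑ b, ∑ c, ∑ d,
          f (σ (a,b,c,d)).1 (σ (a,b,c,d)).2.1 (σ (a,b,c,d)).2.2.1 (σ (a,b,c,d)).2.2.2 := by
  have h2 := Equiv.sum_comp σ (fun t : Fin n × Fin n × Fin n × Fin n => f t.1 t.2.1 t.2.2.1 t.2.2.2)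
  have h3 : (∑ t : Fin n × Fin n × Fin n × Fin n, f t.1 t.2.1 t.2.2.1 t.2.2.2)
      = ∑ a, ∑ b, ∑ c, ∑ d, f a b c d := by
    simp [Fintype.sum_prod_type]
  have h4 : (∑ t : Fin n × Fin n × Fin n × Fin n,
        f (σ t).1 (σ t).2.1 (σ t).2.2.1 (σ t).2.2.2)
      = ∑ a, ∑ b, ∑ c, ∑ d,
          f (σ (a,b,c,d)).1 (σ (a,b,c,d)).2.1 (σ (a,b,c,d)).2.2.1 (σ (a,b,c,d)).2.2.2 := by
    simp [Fintype.sum_prod_type]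
  rw [← h3, ← h4, h2]

lemma final_algebra (G h : Fin n → Fin n → ℝ) (A : Fin n → Fin n → Fin n → ℝ)
    (Bv : Fin n → Fin n → ℝ) (m' : Fin n)
    (hG : ∀ i j, G i j = G j i) (hh : ∀ i j, h i j = h j i)
    (hA : ∀ i j k, A i j k = A j i k) :
    ∑ i, ∑ j, G i j * ((-(∑ k, ∑ l, G k l * h j k * A i m' l)
        - (∑ k, ∑ l, G k l * h i k * A j m' l) - Bv i j)
        - ∑ k, (∑ l, G k l * A i j l) * h k m')
    = ∑ i, ∑ j, ((-(∑ p, ∑ q, G i p * (A m' p q + A m' q p) * G q j)) * h i j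
        + G i j * (-(Bv i j) - ∑ k, ∑ l, G k l * h m' k * A i j l)) := by
  have lhs_eq : (∑ i, ∑ j, G i j * ((-(∑ k, ∑ l, G k l * h j k * A i m' l)
        - (∑ k, ∑ l, G k l * h i k * A j m' l) - Bv i j)
        - ∑ k, (∑ l, G k l * A i j l) * h k m'))
      = -(∑ i, ∑ j, ∑ k, ∑ l, G i j * (G k l * h j k * A i m' l))
        - (∑ i, ∑ j, ∑ k, ∑ l, G i j * (G k l * h i k * A j m' l))
        - (∑ i, ∑ j, G i j * Bv i j)
        - (∑ i, ∑ j, ∑ k, ∑ l, G i j * (G k l * A i j l * h k m')) := by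
    have step : ∀ i j : Fin n, G i j * ((-(∑ k, ∑ l, G k l * h j k * A i m' l)
        - (∑ k, ∑ l, G k l * h i k * A j m' l) - Bv i j)
        - ∑ k, (∑ l, G k l * A i j l) * h k m')
        = -(∑ k, ∑ l, G i j * (G k l * h j k * A i m' l))
          - (∑ k, ∑ l, G i j * (G k l * h i k * A j m' l))
          - G i j * Bv i j
          - (∑ k, ∑ l, G i j * (G k l * A i j l * h k m')) := by
      intro i j
      have e3 : (∑ k, (∑ l, G k l * A i j l) * h k m')
          = ∑ k, ∑ l, G k l * A i j l * h k m' := by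
        refine Finset.sum_congr rfl fun k _ => ?_
        rw [Finset.sum_mul]
      rw [e3]
      simp only [← Finset.mul_sum]
      ring
    rw [Finset.sum_congr rfl fun i _ => Finset.sum_congr rfl fun j _ => step i j]
    simp only [Finset.sum_sub_distrib, Finset.sum_neg_distrib]
  have rhs_eq : (∑ i, ∑ j, ((-(∑ p, ∑ q, G i p * (A m' p q + A m' q p) * G q j)) * h i j
        + G i j * (-(Bv i j) - ∑ k, ∑ l, G k l * h m' k * A i j l)))
      = -(∑ i, ∑ j, ∑ p, ∑ q, G i p * A m' p q * G q j * h i j)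
        - (∑ i, ∑ j, ∑ p, ∑ q, G i p * A m' q p * G q j * h i j)
        - (∑ i, ∑ j, G i j * Bv i j)
        - (∑ i, ∑ j, ∑ k, ∑ l, G i j * (G k l * h m' k * A i j l)) := by
    have step : ∀ i j : Fin n, ((-(∑ p, ∑ q, G i p * (A m' p q + A m' q p) * G q j)) * h i j
        + G i j * (-(Bv i j) - ∑ k, ∑ l, G k l * h m' k * A i j l))
        = -(∑ p, ∑ q, G i p * A m' p q * G q j * h i j)
          - (∑ p, ∑ q, G i p * A m' q p * G q j * h i j)
          - G i j * Bv i j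
          - (∑ k, ∑ l, G i j * (G k l * h m' k * A i j l)) := by
      intro i j
      have e1 : (∑ p, ∑ q, G i p * (A m' p q + A m' q p) * G q j)
          = (∑ p, ∑ q, G i p * A m' p q * G q j) + (∑ p, ∑ q, G i p * A m' q p * G q j) := by
        rw [← Finset.sum_add_distrib]
        refine Finset.sum_congr rfl fun p _ => ?_
        rw [← Finset.sum_add_distrib]
        refine Finset.sum_congr rfl fun q _ => ?_
        ring
      rw [e1]
      have f1 : (∑ p, ∑ q, G i p * A m' p q * G q j) * h i j
          = ∑ p, ∑ q, G i p * A m' p q * G q j * h i j := by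
        rw [Finset.sum_mul]
        exact Finset.sum_congr rfl fun p _ => by rw [Finset.sum_mul]
      have f2 : (∑ p, ∑ q, G i p * A m' q p * G q j) * h i j
          = ∑ p, ∑ q, G i p * A m' q p * G q j * h i j := by
        rw [Finset.sum_mul]
        exact Finset.sum_congr rfl fun p _ => by rw [Finset.sum_mul]
      rw [← f1, ← f2]
      simp only [← Finset.mul_sum]
      ring
    rw [Finset.sum_congr rfl fun i _ => Finset.sum_congr rfl fun j _ => step i j]
    simp only [Finset.sum_sub_distrib, Finset.sum_neg_distrib, Finset.sum_add_distrib]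
  rw [lhs_eq, rhs_eq]
  have eq3 : (∑ i, ∑ j, ∑ k, ∑ l, G i j * (G k l * A i j l * h k m'))
      = ∑ i, ∑ j, ∑ k, ∑ l, G i j * (G k l * h m' k * A i j l) := by
    refine Finset.sum_congr rfl fun i _ => Finset.sum_congr rfl fun j _ =>
      Finset.sum_congr rfl fun k _ => Finset.sum_congr rfl fun l _ => ?_
    rw [hh k m']; ring
  have eq1 : (∑ i, ∑ j, ∑ k, ∑ l, G i j * (G k l * h j k * A i m' l))
      = ∑ i, ∑ j, ∑ p, ∑ q, G i p * A m' q p * G q j * h i j := by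
    rw [sum4_reindex (fun a b c d => G a b * (G c d * h b c * A a m' d))
      ⟨fun t => (t.2.2.2, t.2.1, t.1, t.2.2.1), fun t => (t.2.2.1, t.2.1, t.2.2.2, t.1),
        fun ⟨a,b,c,d⟩ => rfl, fun ⟨a,b,c,d⟩ => rfl⟩]
    refine Finset.sum_congr rfl fun i _ => Finset.sum_congr rfl fun j _ =>
      Finset.sum_congr rfl fun p _ => Finset.sum_congr rfl fun q _ => ?_
    simp only [Equiv.coe_fn_mk]
    rw [hh j i, hA q m' p]
    ring
  have eq2 : (∑ i, ∑ j, ∑ k, ∑ l, G i j * (G k l * h i k * A j m' l))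
      = ∑ i, ∑ j, ∑ p, ∑ q, G i p * A m' p q * G q j * h i j := by
    rw [sum4_reindex (fun a b c d => G a b * (G c d * h a c * A b m' d))
      ⟨fun t => (t.1, t.2.2.1, t.2.1, t.2.2.2), fun t => (t.1, t.2.2.1, t.2.1, t.2.2.2),
        fun ⟨a,b,c,d⟩ => rfl, fun ⟨a,b,c,d⟩ => rfl⟩]
    refine Finset.sum_congr rfl fun i _ => Finset.sum_congr rfl fun j _ =>
      Finset.sum_congr rfl fun p _ => Finset.sum_congr rfl fun q _ => ?_
    simp only [Equiv.coe_fn_mk]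
    rw [hG j q, hA p m' q]
    ring
  rw [eq1, eq2, eq3]
  ring

end Aux

/-- the tension field of the Gauss map u = ν (computed extrinsically for a
sphere-valued map as τ(u) = Δ_Σ u + |∇u|² u) equals the gradient ∇H = g^{ij} ∂_i H ∂_j F,
viewed in u^{-1}TS^n via the identification T_xΣ ≅ T_{u(x)}S^n in ℝ^{n+1}. -/
theorem tension_field_of_gauss_map_eq_grad_meanCurv
    {n : ℕ} (hn : 2 ≤ n)
    (F ν : (Fin n → ℝ) → EuclideanSpace ℝ (Fin (n + 1)))
    (hF : ContDiff ℝ (⊤ : ℕ∞) F) (hν : ContDiff ℝ (⊤ : ℕ∞) ν)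
    (hunit : ∀ x, ‖ν x‖ = 1)
    (horth : ∀ x i, ⟪ν x, pdv i F x⟫ = 0)
    (himm : ∀ x, (gmet F x).det ≠ 0) :
    ∀ x, lapV F ν x + eDen F ν x • ν x
      = ∑ i, ∑ j, ((gmet F x)⁻¹ i j * pdr i (meanCurv F ν) x) • pdv j F x := by
  intro x
  -- basic regularity
  have hF1 : ∀ i, ContDiff ℝ (⊤ : ℕ∞) (pdv i F) := fun i => contDiff_pdv i hF
  have hF2 : ∀ i j, ContDiff ℝ (⊤ : ℕ∞) (pdv i (fun y => pdv j F y)) := fun i j => contDiff_pdv i (hF1 j)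
  have hν1 : ∀ i, ContDiff ℝ (⊤ : ℕ∞) (pdv i ν) := fun i => contDiff_pdv i hν
  have dF : ∀ y, DifferentiableAt ℝ F y := fun y => (hF.differentiable (by simp)).differentiableAt
  have dν : ∀ y, DifferentiableAt ℝ ν y := fun y => (hν.differentiable (by simp)).differentiableAt
  have dF1 : ∀ i y, DifferentiableAt ℝ (pdv i F) y :=
    fun i y => ((hF1 i).differentiable (by simp)).differentiableAt
  have dF2 : ∀ i j y, DifferentiableAt ℝ (pdv i (fun z => pdv j F z)) y :=
    fun i j y => ((hF2 i j).differentiable (by simp)).differentiableAt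
  have dν1 : ∀ i y, DifferentiableAt ℝ (pdv i ν) y :=
    fun i y => ((hν1 i).differentiable (by simp)).differentiableAt
  have dg_at : ∀ (p q : Fin n) y, DifferentiableAt ℝ (fun z => gmet F z p q) y :=
    fun p q y => ((contDiff_gmet F hF p q).differentiable (by simp)).differentiableAt
  have dG_at : ∀ (p q : Fin n) y, DifferentiableAt ℝ (fun z => (gmet F z)⁻¹ p q) y :=
    fun p q y => diffAt_gmetInv F hF himm p q y
  have dsff_at : ∀ (i j : Fin n) y, DifferentiableAt ℝ (fun z => sff F ν z i j) y := by
    intro i j y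
    have : (fun z => sff F ν z i j) = fun z => -⟪pdv i (fun w => pdv j F w) z, ν z⟫ := rfl
    rw [this]
    exact ((dF2 i j y).inner ℝ (dν y)).neg
  -- pointwise facts
  have hνν : ∀ y, ⟪ν y, ν y⟫ = (1:ℝ) := by
    intro y; rw [real_inner_self_eq_norm_mul_norm, hunit y]; norm_num
  have hνdν : ∀ y (i : Fin n), ⟪pdv i ν y, ν y⟫ = (0:ℝ) := by
    intro y i
    have h1 : pdr i (fun z => ⟪ν z, ν z⟫) y = 0 := by
      rw [pdr_congr i hνν y, pdr_const]
    rw [pdr_inner i (dν y) (dν y)] at h1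
    have h2 := real_inner_comm (ν y) (pdv i ν y)
    linarith
  have hW : ∀ y (i l : Fin n), ⟪pdv i ν y, pdv l F y⟫ = -⟪ν y, pdv i (fun z => pdv l F z) y⟫ := by
    intro y i l
    have h1 : pdr i (fun z => ⟪ν z, pdv l F z⟫) y = 0 := by
      rw [pdr_congr i (fun z => horth z l) y, pdr_const]
    rw [pdr_inner i (dν y) (dF1 l y)] at h1
    linarith
  have hWs : ∀ y (i l : Fin n), ⟪pdv i ν y, pdv l F y⟫ = sff F ν y i l := by
    intro y i l
    rw [hW y i l]
    simp only [sff]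
    rw [real_inner_comm]
  have hννdd : ∀ i j : Fin n, ⟪ν x, pdv i (fun y => pdv j ν y) x⟫ = -⟪pdv i ν x, pdv j ν x⟫ := by
    intro i j
    have h1 : pdr i (fun z => ⟪pdv j ν z, ν z⟫) x = 0 := by
      rw [pdr_congr i (fun z => hνdν z j) x, pdr_const]
    rw [pdr_inner i (dν1 j x) (dν x)] at h1
    have c1 := real_inner_comm (ν x) (pdv i (fun y => pdv j ν y) x)
    have c2 := real_inner_comm (pdv j ν x) (pdv i ν x)
    linarith
  have hννF : ∀ i j p : Fin n, ⟪pdv i (fun y => pdv j ν y) x, pdv p F x⟫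
      = -⟪pdv j ν x, pdv i (fun y => pdv p F y) x⟫ - ⟪pdv i ν x, pdv j (fun y => pdv p F y) x⟫
        - ⟪ν x, pdv i (fun y => pdv j (fun z => pdv p F z) y) x⟫ := by
    intro i j p
    have h1 : pdr i (fun z => ⟪pdv j ν z, pdv p F z⟫) x
        = pdr i (fun z => -⟪ν z, pdv j (fun w => pdv p F w) z⟫) x :=
      pdr_congr i (fun z => hW z j p) x
    rw [pdr_inner i (dν1 j x) (dF1 p x), pdr_neg, pdr_inner i (dν x) (dF2 j p x)] at h1
    linarith
  -- Weingarten relation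
  have hWein : ∀ a : Fin n, pdv a ν x
      = ∑ k, ∑ l, ((gmet F x)⁻¹ k l * sff F ν x a k) • pdv l F x := by
    intro a
    apply eq_of_inner_basis F ν x (hunit x) (horth x) himm
    · have hz : ⟪ν x, ∑ k, ∑ l, ((gmet F x)⁻¹ k l * sff F ν x a k) • pdv l F x⟫ = (0:ℝ) := by
        rw [inner_sum]; apply Finset.sum_eq_zero; intro k _
        rw [inner_sum]; apply Finset.sum_eq_zero; intro l _
        rw [real_inner_smul_right, horth x l, mul_zero]
      rw [hz, real_inner_comm, hνdν x a]
    · intro l0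
      have hlhs : ⟪pdv l0 F x, pdv a ν x⟫ = sff F ν x a l0 := by
        rw [real_inner_comm]; exact hWs x a l0
      have hrhs : ⟪pdv l0 F x, ∑ k, ∑ l, ((gmet F x)⁻¹ k l * sff F ν x a k) • pdv l F x⟫
          = sff F ν x a l0 := by
        rw [inner_sum]
        have e1 : ∀ k : Fin n,
            ⟪pdv l0 F x, ∑ l, ((gmet F x)⁻¹ k l * sff F ν x a k) • pdv l F x⟫
            = sff F ν x a k * (∑ l, (gmet F x)⁻¹ k l * gmet F x l l0) := by
          intro k
          rw [inner_sum, Finset.mul_sum]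
          refine Finset.sum_congr rfl fun l _ => ?_
          rw [real_inner_smul_right]
          have : ⟪pdv l0 F x, pdv l F x⟫ = gmet F x l l0 := gmet_symm F x l0 l
          rw [this]; ring
        rw [Finset.sum_congr rfl fun k _ => e1 k]
        have e2 : ∀ k : Fin n, sff F ν x a k * (∑ l, (gmet F x)⁻¹ k l * gmet F x l l0)
            = sff F ν x a k * (if k = l0 then 1 else 0) := by
          intro k; rw [gmetInv_mul F himm x k l0]
        rw [Finset.sum_congr rfl fun k _ => e2 k]
        simp
      rw [hlhs, hrhs]
  -- expansion of ⟪∂ν, ∂∂F⟫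
  have hWinner : ∀ a b c : Fin n, ⟪pdv a ν x, pdv b (fun y => pdv c F y) x⟫
      = ∑ k, ∑ l, (gmet F x)⁻¹ k l * sff F ν x a k
          * ⟪pdv b (fun y => pdv c F y) x, pdv l F x⟫ := by
    intro a b c
    rw [hWein a, sum_inner]
    refine Finset.sum_congr rfl fun k _ => ?_
    rw [sum_inner]
    refine Finset.sum_congr rfl fun l _ => ?_
    rw [real_inner_smul_left, real_inner_comm]
  -- symmetry of third derivatives
  have hB3 : ∀ (i j p : Fin n), pdv p (fun y => pdv i (fun z => pdv j F z) y) x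
      = pdv i (fun y => pdv j (fun z => pdv p F z) y) x := by
    intro i j p
    have e1 : (fun y => pdv p (fun z => pdv j F z) y) = (fun y => pdv j (fun z => pdv p F z) y) :=
      funext (fun y => pdv_comm hF p j y)
    calc pdv p (fun y => pdv i (fun z => pdv j F z) y) x
        = pdv i (fun y => pdv p (fun z => pdv j F z) y) x := pdv_comm (hF1 j) p i x
      _ = pdv i (fun y => pdv j (fun z => pdv p F z) y) x := by rw [e1]
  -- symmetries of atoms
  have hGsym : ∀ i j : Fin n, (gmet F x)⁻¹ i j = (gmet F x)⁻¹ j i := fun i j => gmetInv_symm F x i j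
  have hAsym : ∀ i j k : Fin n, ⟪pdv i (fun y => pdv j F y) x, pdv k F x⟫
      = ⟪pdv j (fun y => pdv i F y) x, pdv k F x⟫ := by
    intro i j k
    rw [pdv_comm hF i j x]
  have hhsym : ∀ i j : Fin n, sff F ν x i j = sff F ν x j i := by
    intro i j
    simp only [sff]
    rw [pdv_comm hF i j x]
  -- derivative of the metric
  have hdg : ∀ m' p q : Fin n, pdr m' (fun y => gmet F y p q) x
      = ⟪pdv m' (fun y => pdv p F y) x, pdv q F x⟫ + ⟪pdv m' (fun y => pdv q F y) x, pdv p F x⟫ := by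
    intro m' p q
    have e : ∀ y, gmet F y p q = ⟪pdv p F y, pdv q F y⟫ := fun y => rfl
    rw [pdr_congr m' e x, pdr_inner m' (dF1 p x) (dF1 q x)]
    rw [real_inner_comm (pdv p F x)]
  -- derivative of the inverse metric
  have hdG : ∀ m' a b : Fin n, pdr m' (fun y => (gmet F y)⁻¹ a b) x
      = -∑ p, ∑ q, (gmet F x)⁻¹ a p * pdr m' (fun y => gmet F y p q) x * (gmet F x)⁻¹ q b := by
    intro m' a b
    have hrel : ∀ c : Fin n, (∑ j, (pdr m' (fun y => (gmet F y)⁻¹ a j) x * gmet F x j c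
        + (gmet F x)⁻¹ a j * pdr m' (fun y => gmet F y j c) x)) = 0 := by
      intro c
      have h1 : pdr m' (fun y => ∑ j, (gmet F y)⁻¹ a j * gmet F y j c) x = 0 := by
        have e : ∀ y, (∑ j, (gmet F y)⁻¹ a j * gmet F y j c) = (if a = c then (1:ℝ) else 0) :=
          fun y => gmetInv_mul F himm y a c
        rw [pdr_congr m' e x, pdr_const]
      rw [pdr_sum m' Finset.univ (fun j _ => (dG_at a j x).fun_mul (dg_at j c x))] at h1
      rw [Finset.sum_congr rfl (fun j _ => pdr_mul m' (dG_at a j x) (dg_at j c x))] at h1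
      exact h1
    have key : pdr m' (fun y => (gmet F y)⁻¹ a b) x
        = ∑ q, (∑ p, pdr m' (fun y => (gmet F y)⁻¹ a p) x * gmet F x p q) * (gmet F x)⁻¹ q b := by
      have e1 : ∀ q : Fin n, (∑ p, pdr m' (fun y => (gmet F y)⁻¹ a p) x * gmet F x p q)
          = -∑ p, (gmet F x)⁻¹ a p * pdr m' (fun y => gmet F y p q) x := by
        intro q
        have := hrel q
        rw [Finset.sum_add_distrib] at this
        linarith
      have e2 : (∑ q, (∑ p, pdr m' (fun y => (gmet F y)⁻¹ a p) x * gmet F x p q) * (gmet F x)⁻¹ q b)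
          = ∑ p, pdr m' (fun y => (gmet F y)⁻¹ a p) x * (∑ q, gmet F x p q * (gmet F x)⁻¹ q b) := by
        simp only [Finset.sum_mul]
        rw [Finset.sum_comm]
        refine Finset.sum_congr rfl fun p _ => ?_
        rw [Finset.mul_sum]
        refine Finset.sum_congr rfl fun q _ => ?_
        ring
      rw [e2]
      have e3 : ∀ p : Fin n, pdr m' (fun y => (gmet F y)⁻¹ a p) x
            * (∑ q, gmet F x p q * (gmet F x)⁻¹ q b)
          = pdr m' (fun y => (gmet F y)⁻¹ a p) x * (if p = b then 1 else 0) := by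
        intro p; rw [mul_gmetInv F himm x p b]
      rw [Finset.sum_congr rfl fun p _ => e3 p]
      simp
    rw [key]
    have e1 : ∀ q : Fin n, (∑ p, pdr m' (fun y => (gmet F y)⁻¹ a p) x * gmet F x p q)
        = -∑ p, (gmet F x)⁻¹ a p * pdr m' (fun y => gmet F y p q) x := by
      intro q
      have := hrel q
      rw [Finset.sum_add_distrib] at this
      linarith
    rw [Finset.sum_congr rfl fun q _ => by rw [e1 q]]
    have flip : (∑ q, (-∑ p, (gmet F x)⁻¹ a p * pdr m' (fun y => gmet F y p q) x) * (gmet F x)⁻¹ q b)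
        = ∑ q, ∑ p, -((gmet F x)⁻¹ a p * pdr m' (fun y => gmet F y p q) x * (gmet F x)⁻¹ q b) := by
      refine Finset.sum_congr rfl fun q _ => ?_
      rw [neg_mul, Finset.sum_mul, ← Finset.sum_neg_distrib]
      try exact Finset.sum_congr rfl fun p _ => by ring
    rw [flip, Finset.sum_comm]
    simp only [Finset.sum_neg_distrib]
  -- derivative of the second fundamental form
  have hdh : ∀ m' i j : Fin n, pdr m' (fun y => sff F ν y i j) x
      = -⟪ν x, pdv i (fun y => pdv j (fun z => pdv m' F z) y) x⟫
        - ∑ k, ∑ l, (gmet F x)⁻¹ k l * sff F ν x m' k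
            * ⟪pdv i (fun y => pdv j F y) x, pdv l F x⟫ := by
    intro m' i j
    have e : ∀ y, sff F ν y i j = -⟪pdv i (fun z => pdv j F z) y, ν y⟫ := fun y => rfl
    rw [pdr_congr m' e x, pdr_neg, pdr_inner m' (dF2 i j x) (dν x)]
    have t1 : ⟪pdv m' (fun y => pdv i (fun z => pdv j F z) y) x, ν x⟫
        = ⟪ν x, pdv i (fun y => pdv j (fun z => pdv m' F z) y) x⟫ := by
      rw [hB3 i j m', real_inner_comm]
    have t2 : ⟪pdv i (fun y => pdv j F y) x, pdv m' ν x⟫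
        = ∑ k, ∑ l, (gmet F x)⁻¹ k l * sff F ν x m' k
            * ⟪pdv i (fun y => pdv j F y) x, pdv l F x⟫ := by
      rw [real_inner_comm, hWinner m' i j]
    rw [t1, t2]
    ring
  -- derivative of the mean curvature
  have hdH : ∀ m' : Fin n, pdr m' (meanCurv F ν) x
      = ∑ i, ∑ j, (pdr m' (fun y => (gmet F y)⁻¹ i j) x * sff F ν x i j
          + (gmet F x)⁻¹ i j * pdr m' (fun y => sff F ν y i j) x) := by
    intro m'
    have e : ∀ y, meanCurv F ν y = ∑ i, ∑ j, (gmet F y)⁻¹ i j * sff F ν y i j := fun y => rfl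
    have d1 : ∀ (i : Fin n) (y : Fin n → ℝ),
        DifferentiableAt ℝ (fun z => ∑ j, (gmet F z)⁻¹ i j * sff F ν z i j) y := by
      intro i y
      apply DifferentiableAt.fun_sum
      intro j _
      exact (dG_at i j y).mul (dsff_at i j y)
    rw [pdr_congr m' e x, pdr_sum m' Finset.univ (fun i _ => d1 i x)]
    refine Finset.sum_congr rfl fun i _ => ?_
    rw [pdr_sum m' Finset.univ (fun j _ => (dG_at i j x).fun_mul (dsff_at i j x))]
    refine Finset.sum_congr rfl fun j _ => ?_
    exact pdr_mul m' (dG_at i j x) (dsff_at i j x)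
  -- the two components
  apply eq_of_inner_basis F ν x (hunit x) (horth x) himm
  · -- normal component
    have hR : ⟪ν x, ∑ i, ∑ j, ((gmet F x)⁻¹ i j * pdr i (meanCurv F ν) x) • pdv j F x⟫ = (0:ℝ) := by
      rw [inner_sum]; apply Finset.sum_eq_zero; intro i _
      rw [inner_sum]; apply Finset.sum_eq_zero; intro j _
      rw [real_inner_smul_right, horth x j, mul_zero]
    rw [hR, inner_add_right, real_inner_smul_right, hνν x, mul_one]
    have hL : ⟪ν x, lapV F ν x⟫ = -eDen F ν x := by
      have e : lapV F ν x = ∑ i, ∑ j, (gmet F x)⁻¹ i j •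
          (pdv i (fun y => pdv j ν y) x - ∑ k, chr F x k i j • pdv k ν x) := rfl
      rw [e, inner_sum]
      have e2 : ∀ i : Fin n, ⟪ν x, ∑ j, (gmet F x)⁻¹ i j •
          (pdv i (fun y => pdv j ν y) x - ∑ k, chr F x k i j • pdv k ν x)⟫
          = ∑ j, (gmet F x)⁻¹ i j * -⟪pdv i ν x, pdv j ν x⟫ := by
        intro i
        rw [inner_sum]
        refine Finset.sum_congr rfl fun j _ => ?_
        rw [real_inner_smul_right, inner_sub_right]
        have hz : ⟪ν x, ∑ k, chr F x k i j • pdv k ν x⟫ = (0:ℝ) := by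
          rw [inner_sum]; apply Finset.sum_eq_zero; intro k _
          rw [real_inner_smul_right, real_inner_comm, hνdν x k, mul_zero]
        rw [hz, sub_zero, hννdd i j]
      rw [Finset.sum_congr rfl fun i _ => e2 i]
      have e3 : eDen F ν x = ∑ i, ∑ j, (gmet F x)⁻¹ i j * ⟪pdv i ν x, pdv j ν x⟫ := rfl
      rw [e3]
      simp only [mul_neg, Finset.sum_neg_distrib]
    rw [hL]; ring
  · -- tangential component
    intro p₀
    have hRt : ⟪pdv p₀ F x, ∑ i, ∑ j, ((gmet F x)⁻¹ i j * pdr i (meanCurv F ν) x) • pdv j F x⟫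
        = pdr p₀ (meanCurv F ν) x := by
      rw [inner_sum]
      have e1 : ∀ i : Fin n,
          ⟪pdv p₀ F x, ∑ j, ((gmet F x)⁻¹ i j * pdr i (meanCurv F ν) x) • pdv j F x⟫
          = pdr i (meanCurv F ν) x * (∑ j, (gmet F x)⁻¹ i j * gmet F x j p₀) := by
        intro i
        rw [inner_sum, Finset.mul_sum]
        refine Finset.sum_congr rfl fun j _ => ?_
        rw [real_inner_smul_right]
        have e0 : ⟪pdv p₀ F x, pdv j F x⟫ = gmet F x j p₀ := gmet_symm F x p₀ j
        rw [e0]; ring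
      rw [Finset.sum_congr rfl fun i _ => e1 i]
      have e2 : ∀ i : Fin n, pdr i (meanCurv F ν) x * (∑ j, (gmet F x)⁻¹ i j * gmet F x j p₀)
          = pdr i (meanCurv F ν) x * (if i = p₀ then 1 else 0) := by
        intro i; rw [gmetInv_mul F himm x i p₀]
      rw [Finset.sum_congr rfl fun i _ => e2 i]
      simp
    rw [hRt]
    have hLt : ⟪pdv p₀ F x, lapV F ν x + eDen F ν x • ν x⟫
        = ∑ i, ∑ j, (gmet F x)⁻¹ i j *
            ((-(∑ k, ∑ l, (gmet F x)⁻¹ k l * sff F ν x j k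
                  * ⟪pdv i (fun y => pdv p₀ F y) x, pdv l F x⟫)
              - (∑ k, ∑ l, (gmet F x)⁻¹ k l * sff F ν x i k
                  * ⟪pdv j (fun y => pdv p₀ F y) x, pdv l F x⟫)
              - ⟪ν x, pdv i (fun y => pdv j (fun z => pdv p₀ F z) y) x⟫)
              - ∑ k, (∑ l, (gmet F x)⁻¹ k l * ⟪pdv i (fun y => pdv j F y) x, pdv l F x⟫)
                  * sff F ν x k p₀) := by
      rw [inner_add_right, real_inner_smul_right]
      have hz0 : ⟪pdv p₀ F x, ν x⟫ = (0:ℝ) := by rw [real_inner_comm]; exact horth x p₀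
      rw [hz0, mul_zero, add_zero]
      have e : lapV F ν x = ∑ i, ∑ j, (gmet F x)⁻¹ i j •
          (pdv i (fun y => pdv j ν y) x - ∑ k, chr F x k i j • pdv k ν x) := rfl
      rw [e, inner_sum]
      refine Finset.sum_congr rfl fun i _ => ?_
      rw [inner_sum]
      refine Finset.sum_congr rfl fun j _ => ?_
      rw [real_inner_smul_right, inner_sub_right]
      have eX : ⟪pdv p₀ F x, pdv i (fun y => pdv j ν y) x⟫
          = -(∑ k, ∑ l, (gmet F x)⁻¹ k l * sff F ν x j k
                * ⟪pdv i (fun y => pdv p₀ F y) x, pdv l F x⟫)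
            - (∑ k, ∑ l, (gmet F x)⁻¹ k l * sff F ν x i k
                * ⟪pdv j (fun y => pdv p₀ F y) x, pdv l F x⟫)
            - ⟪ν x, pdv i (fun y => pdv j (fun z => pdv p₀ F z) y) x⟫ := by
        rw [real_inner_comm, hννF i j p₀, hWinner j i p₀, hWinner i j p₀]
      have eY : ⟪pdv p₀ F x, ∑ k, chr F x k i j • pdv k ν x⟫
          = ∑ k, (∑ l, (gmet F x)⁻¹ k l * ⟪pdv i (fun y => pdv j F y) x, pdv l F x⟫)
              * sff F ν x k p₀ := by
        rw [inner_sum]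
        refine Finset.sum_congr rfl fun k _ => ?_
        rw [real_inner_smul_right]
        have e5 : ⟪pdv p₀ F x, pdv k ν x⟫ = sff F ν x k p₀ := by
          rw [real_inner_comm]; exact hWs x k p₀
        rw [e5]
        rfl
      rw [eX, eY]
    rw [hLt]
    have hRt2 : pdr p₀ (meanCurv F ν) x
        = ∑ i, ∑ j, ((-(∑ p, ∑ q, (gmet F x)⁻¹ i p *
              (⟪pdv p₀ (fun y => pdv p F y) x, pdv q F x⟫
                + ⟪pdv p₀ (fun y => pdv q F y) x, pdv p F x⟫)
              * (gmet F x)⁻¹ q j)) * sff F ν x i j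
            + (gmet F x)⁻¹ i j * (-(⟪ν x, pdv i (fun y => pdv j (fun z => pdv p₀ F z) y) x⟫)
              - ∑ k, ∑ l, (gmet F x)⁻¹ k l * sff F ν x p₀ k
                  * ⟪pdv i (fun y => pdv j F y) x, pdv l F x⟫)) := by
      rw [hdH p₀]
      refine Finset.sum_congr rfl fun i _ => Finset.sum_congr rfl fun j _ => ?_
      rw [hdG p₀ i j, hdh p₀ i j]
      have e : (∑ p, ∑ q, (gmet F x)⁻¹ i p * pdr p₀ (fun y => gmet F y p q) x * (gmet F x)⁻¹ q j)
          = ∑ p, ∑ q, (gmet F x)⁻¹ i p *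
              (⟪pdv p₀ (fun y => pdv p F y) x, pdv q F x⟫
                + ⟪pdv p₀ (fun y => pdv q F y) x, pdv p F x⟫) * (gmet F x)⁻¹ q j := by
        refine Finset.sum_congr rfl fun p _ => Finset.sum_congr rfl fun q _ => ?_
        rw [hdg p₀ p q]
      rw [e]
    rw [hRt2]
    exact final_algebra (fun i j => (gmet F x)⁻¹ i j) (fun i j => sff F ν x i j)
      (fun b c l => ⟪pdv b (fun y => pdv c F y) x, pdv l F x⟫)
      (fun i j => ⟪ν x, pdv i (fun y => pdv j (fun z => pdv p₀ F z) y) x⟫) p₀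
      hGsym hhsym hAsym

end
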